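/- Under the setup, no mixed arc crosses a down arc: if (b₁,r₁) ∈ E' has a mixed witness u₁ and (b₂,r₂) ∈ E' has a down witness, then, writing b = max(t b₁, t r₁), γ = min(t b₂, t r₂) and δ = max(t b₂, t r₂), the open intervals (t u₁, b) and (γ, δ) do not interleave. -/

import Mathlib

/-- The above-anchored L-frame `A(t,h,w) = ({t} × [-t, -t+h]) ∪ ([t, t+w] × {-t})`. -/
def Aframe (t h w : ℝ) : Set (ℝ × ℝ) :=
  ({t} : Set ℝ) ×ˢ Set.Icc (-t) (-t + h) ∪ Set.Icc t (t + w) ×ˢ ({-t} : Set ℝ)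

/-- The intersection graph of a family of subsets of the plane. -/
def interGraph {V : Type*} (F : V → Set (ℝ × ℝ)) : SimpleGraph V where
  Adj u v := u ≠ v ∧ (F u ∩ F v).Nonempty
  symm := by
    constructor
    intro u v h
    exact ⟨h.1.symm, by rw [Set.inter_comm]; exact h.2⟩
  loopless := by
    constructor
    intro u h
    exact h.1 rfl

/-- A set of vertices is a dominating set: every vertex is in it or adjacent to a member. -/
def IsDomSet {V : Type*} (G : SimpleGraph V) (D : Set V) : Prop :=
  ∀ v, v ∈ D ∨ ∃ u ∈ D, G.Adj u v

/-- Euclidean distance between the corners `(t b, -(t b))` and `(t r, -(t r))` of the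
L-frames indexed by `b` and `r`. -/
noncomputable def cornerDist {V : Type*} (t : V → ℝ) (b r : V) : ℝ :=
  Real.sqrt ((t b - t r) ^ 2 + ((-(t b)) - (-(t r))) ^ 2)

/-- `(b,r) ∈ S(u)`: `b ∈ B`, `r ∈ R`, and both frames `F b` and `F r` intersect `F u`. -/
def InS {V : Type*} (F : V → Set (ℝ × ℝ)) (B R : Set V) (u b r : V) : Prop :=
  b ∈ B ∧ r ∈ R ∧ (F b ∩ F u).Nonempty ∧ (F r ∩ F u).Nonempty

/-- `u` is a witness of `(b,r)`: `(b,r) ∈ S(u)` and the distance between the corners of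
`F b` and `F r` is minimum among all pairs in `S(u)`. -/
def IsWitness {V : Type*} (F : V → Set (ℝ × ℝ)) (t : V → ℝ) (B R : Set V)
    (u b r : V) : Prop :=
  InS F B R u b r ∧ ∀ b' r', InS F B R u b' r' → cornerDist t b r ≤ cornerDist t b' r'

/-- `(b,r) ∈ E'`: the pair admits a witness. -/
def InE' {V : Type*} (F : V → Set (ℝ × ℝ)) (t : V → ℝ) (B R : Set V) (b r : V) : Prop :=
  ∃ u, IsWitness F t B R u b r

/-- `u` is a top witness of `(b,r)`. -/
def TopWitness {V : Type*} (F : V → Set (ℝ × ℝ)) (t : V → ℝ) (B R : Set V)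
    (u b r : V) : Prop :=
  IsWitness F t B R u b r ∧ t b ≤ t u ∧ t r ≤ t u

/-- `u` is a down witness of `(b,r)`. -/
def DownWitness {V : Type*} (F : V → Set (ℝ × ℝ)) (t : V → ℝ) (B R : Set V)
    (u b r : V) : Prop :=
  IsWitness F t B R u b r ∧ t u ≤ t b ∧ t u ≤ t r

/-- `u` is a mixed witness of `(b,r)`. -/
def MixedWitness {V : Type*} (F : V → Set (ℝ × ℝ)) (t : V → ℝ) (B R : Set V)
    (u b r : V) : Prop :=
  IsWitness F t B R u b r ∧ min (t b) (t r) < t u ∧ t u < max (t b) (t r)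

/-- Open intervals `(p,q)` and `(r,s)` interleave. -/
def Interleave (p q r s : ℝ) : Prop :=
  (p < r ∧ r < q ∧ q < s) ∨ (r < p ∧ p < s ∧ s < q)

/-!
A witness `u` of `(b, r)` cannot meet the frame of any vertex of `B ∪ R` whose corner lies
strictly between the corners of `b` and `r`: swapping that vertex in for the one of its colour
gives a pair in `S(u)` with closer corners. In each interleaving configuration, the arm lengths
certified by the intersections along the two arcs force one of the two witnesses to meet such a
frame whose corner lies strictly inside its own arc.
-/

lemma mem_Aframe {t h w : ℝ} {p : ℝ × ℝ} :
    p ∈ Aframe t h w ↔ (p.1 = t ∧ -t ≤ p.2 ∧ p.2 ≤ -t + h) ∨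
      (t ≤ p.1 ∧ p.1 ≤ t + w ∧ p.2 = -t) := by
  simp only [Aframe, Set.mem_union, Set.mem_prod, Set.mem_singleton_iff, Set.mem_Icc,
    and_assoc]

lemma Aframe_inter_nonempty_iff {t h w t' h' w' : ℝ} (hw : 0 ≤ w) (hh' : 0 ≤ h')
    (hle : t ≤ t') :
    (Aframe t h w ∩ Aframe t' h' w').Nonempty ↔ t' - t ≤ w ∧ t' - t ≤ h' := by
  constructor
  · rintro ⟨⟨x, y⟩, hp, hq⟩
    rw [mem_Aframe] at hp hq
    rcases hp with ⟨_, _, _⟩ | ⟨_, _, _⟩ <;> rcases hq with ⟨_, _, _⟩ | ⟨_, _, _⟩ <;>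
      constructor <;> dsimp only at * <;> linarith
  · rintro ⟨h₁, h₂⟩
    exact ⟨(t', -t), mem_Aframe.2 (Or.inr ⟨hle, by linarith, rfl⟩),
      mem_Aframe.2 (Or.inl ⟨rfl, by linarith, by linarith⟩)⟩

lemma abs_sub_right_lt_of_between {a b c : ℝ} (h₁ : min a b < c) (h₂ : c < max a b) :
    |c - b| < |a - b| := by
  rcases le_total a b with hab | hab
  · rw [min_eq_left hab] at h₁
    rw [max_eq_right hab] at h₂
    rw [abs_of_nonpos (by linarith), abs_of_nonpos (by linarith)]
    linarith
  · rw [min_eq_right hab] at h₁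
    rw [max_eq_left hab] at h₂
    rw [abs_of_nonneg (by linarith), abs_of_nonneg (by linarith)]
    linarith

lemma abs_sub_left_lt_of_between {a b c : ℝ} (h₁ : min a b < c) (h₂ : c < max a b) :
    |a - c| < |a - b| := by
  rw [abs_sub_comm a c, abs_sub_comm a b]
  exact abs_sub_right_lt_of_between (min_comm a b ▸ h₁) (max_comm a b ▸ h₂)

lemma cornerDist_eq {V : Type*} (t : V → ℝ) (b r : V) :
    cornerDist t b r = √2 * |t b - t r| := by
  rw [cornerDist, show (t b - t r) ^ 2 + (-t b - -t r) ^ 2 = 2 * (t b - t r) ^ 2 by ring,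
    Real.sqrt_mul zero_le_two, Real.sqrt_sq_eq_abs]

section Frames

variable {V : Type*} {t h w : V → ℝ} {F : V → Set (ℝ × ℝ)}

lemma inter_nonempty_iff_of_le (hh : ∀ v, 0 ≤ h v) (hw : ∀ v, 0 ≤ w v)
    (hF : ∀ v, F v = Aframe (t v) (h v) (w v)) {p q : V} (hpq : t p ≤ t q) :
    (F p ∩ F q).Nonempty ↔ t q - t p ≤ w p ∧ t q - t p ≤ h q := by
  rw [hF, hF]
  exact Aframe_inter_nonempty_iff (hw p) (hh q) hpq

/-- The horizontal arm of `F q`, reaching `F y`, also reaches `F z`; the vertical arm of `F z`,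
reaching `F p`, also reaches `F q`. -/
lemma inter_nonempty_of_nested (hh : ∀ v, 0 ≤ h v) (hw : ∀ v, 0 ≤ w v)
    (hF : ∀ v, F v = Aframe (t v) (h v) (w v)) {p q y z : V}
    (hy : (F y ∩ F q).Nonempty) (hz : (F z ∩ F p).Nonempty)
    (hpq : t p ≤ t q) (hqz : t q ≤ t z) (hzy : t z ≤ t y) :
    (F z ∩ F q).Nonempty := by
  rw [Set.inter_comm] at hy hz ⊢
  have hqy := ((inter_nonempty_iff_of_le hh hw hF (hqz.trans hzy)).1 hy).1
  have hpz := ((inter_nonempty_iff_of_le hh hw hF (hpq.trans hqz)).1 hz).2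
  exact (inter_nonempty_iff_of_le hh hw hF hqz).2 ⟨by linarith, by linarith⟩

end Frames

namespace IsWitness

variable {V : Type*} {F : V → Set (ℝ × ℝ)} {t : V → ℝ} {B R : Set V} {u b r : V}

lemma abs_sub_le (hu : IsWitness F t B R u b r) {b' r' : V} (hS : InS F B R u b' r') :
    |t b - t r| ≤ |t b' - t r'| := by
  have hd := hu.2 b' r' hS
  rw [cornerDist_eq, cornerDist_eq] at hd
  exact le_of_mul_le_mul_left hd (by positivity)

lemma exists_endpoint (hu : IsWitness F t B R u b r) {s : ℝ} (hs : s = t b ∨ s = t r) :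
    ∃ y ∈ B ∪ R, t y = s ∧ (F y ∩ F u).Nonempty := by
  obtain ⟨hb, hr, hbu, hru⟩ := hu.1
  rcases hs with rfl | rfl
  exacts [⟨b, Or.inl hb, rfl, hbu⟩, ⟨r, Or.inr hr, rfl, hru⟩]

lemma not_inter_of_between (hu : IsWitness F t B R u b r) {z : V} (hz : z ∈ B ∪ R)
    (hmin : min (t b) (t r) < t z) (hmax : t z < max (t b) (t r)) :
    ¬ (F z ∩ F u).Nonempty := by
  intro hzu
  obtain ⟨hb, hr, hbu, hru⟩ := hu.1
  rcases hz with hzB | hzR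
  · exact (hu.abs_sub_le ⟨hzB, hr, hzu, hru⟩).not_gt
      (abs_sub_right_lt_of_between hmin hmax)
  · exact (hu.abs_sub_le ⟨hb, hzR, hbu, hzu⟩).not_gt
      (abs_sub_left_lt_of_between hmin hmax)

end IsWitness

theorem no_mixed_arc_crosses_down_arc_general {V : Type*}
    (t h w : V → ℝ) (hh : ∀ v, 0 ≤ h v) (hw : ∀ v, 0 ≤ w v)
    (F : V → Set (ℝ × ℝ)) (hF : ∀ v, F v = Aframe (t v) (h v) (w v))
    (B R : Set V)
    (b₁ r₁ b₂ r₂ u₁ : V)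
    (h₁ : MixedWitness F t B R u₁ b₁ r₁)
    (h₂ : ∃ u₂, DownWitness F t B R u₂ b₂ r₂) :
    ¬ Interleave (t u₁) (max (t b₁) (t r₁))
        (min (t b₂) (t r₂)) (max (t b₂) (t r₂)) := by
  obtain ⟨hu₁, hmin₁, hmax₁⟩ := h₁
  obtain ⟨u₂, hu₂, hb₂, hr₂⟩ := h₂
  have hu₂γ : t u₂ ≤ min (t b₂) (t r₂) := le_min hb₂ hr₂
  obtain ⟨y, hyBR, hyt, hy⟩ := hu₁.exists_endpoint (max_choice (t b₁) (t r₁))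
  obtain ⟨zγ, hγBR, hγ, hzγ⟩ := hu₂.exists_endpoint (min_choice (t b₂) (t r₂))
  obtain ⟨zδ, hδBR, hδ, hzδ⟩ := hu₂.exists_endpoint (max_choice (t b₂) (t r₂))
  have nested := @inter_nonempty_of_nested _ _ _ _ _ hh hw hF
  rintro (⟨hu₁γ, hγb, hbδ⟩ | ⟨hγu₁, hu₁δ, hδb⟩)
  · rcases le_total (t u₂) (t u₁) with h₂₁ | h₁₂
    · exact hu₁.not_inter_of_between hγBR (by linarith) (by linarith)
        (nested hy hzγ h₂₁ (by linarith) (by linarith))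
    · exact hu₂.not_inter_of_between hyBR (by linarith) (by linarith)
        (nested hzδ hy h₁₂ (by linarith) (by linarith))
  · exact hu₁.not_inter_of_between hδBR (by linarith) (by linarith)
      (nested hy hzδ (by linarith) (by linarith) (by linarith))

/-- No mixed arc crosses a down arc. -/
theorem no_mixed_arc_crosses_down_arc {V : Type*} [Fintype V]
    (t h w : V → ℝ) (hh : ∀ v, 0 ≤ h v) (hw : ∀ v, 0 ≤ w v)
    (F : V → Set (ℝ × ℝ)) (hF : ∀ v, F v = Aframe (t v) (h v) (w v))
    (B R : Set V) (hBR : Disjoint B R)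
    (hB : IsDomSet (interGraph F) B) (hR : IsDomSet (interGraph F) R)
    (b₁ r₁ b₂ r₂ u₁ : V)
    (h₁ : MixedWitness F t B R u₁ b₁ r₁)
    (h₂ : ∃ u₂, DownWitness F t B R u₂ b₂ r₂) :
    ¬ Interleave (t u₁) (max (t b₁) (t r₁))
        (min (t b₂) (t r₂)) (max (t b₂) (t r₂)) :=
  no_mixed_arc_crosses_down_arc_general t h w hh hw F hF B R b₁ r₁ b₂ r₂ u₁ h₁ h₂
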